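/- Equation (8), the finite-subgroup version of Theorem 1: Let n ≥ 1, d ≥ 0, and let S be a finite subgroup of O(n). Let ẽ : ℝⁿ × S → ℝ be a feature map such that ẽ(·, C) is d times continuously differentiable for every C ∈ S, and for each B ∈ S let β_B be coefficients defining a transformed differential operator χ_B^{(A)}. Define Φ^S[ẽ](x, A) = Σ_{B ∈ S} χ_B^{(A)}[ẽ(·, A B)](x) for A ∈ S. Then for every Ã ∈ S, every x ∈ ℝⁿ and every A ∈ S, Φ^S[π_Ã[ẽ]](x, A) = Φ^S[ẽ](Ã⁻¹x, Ã⁻¹A), where (π_Ã[ẽ])(x, C) = ẽ(Ã⁻¹x, Ã⁻¹C). -/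

import Mathlib

/-- Action of an `n × n` real matrix on `ℝⁿ` (with the Euclidean norm) by
matrix-vector multiplication. -/
noncomputable def mact {n : ℕ} (A : Matrix (Fin n) (Fin n) ℝ) :
    EuclideanSpace ℝ (Fin n) →ₗ[ℝ] EuclideanSpace ℝ (Fin n) :=
  Matrix.toEuclideanLin A

/-- The list of direction vectors `A e₁` repeated `m 1` times, ..., `A eₙ` repeated
`m n` times, as a function on `Fin (∑ i, m i)` (block `i` consists of copies of `A eᵢ`). -/
noncomputable def dirs {n : ℕ} (A : Matrix (Fin n) (Fin n) ℝ) (m : Fin n → ℕ)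
    (j : Fin (∑ i, m i)) : EuclideanSpace ℝ (Fin n) :=
  (((List.finRange n).flatMap fun i =>
      List.replicate (m i) (mact A (EuclideanSpace.single i 1)))).getD j 0

/-- The transformed differential operator
`χ^{(A)}[r](x) = ∑_{|m| ≤ d} β_m · D^{|m|} r(x)[A e₁ repeated m₁ times, …, A eₙ repeated mₙ times]`,
where multi-indices `m ∈ ℕⁿ` with `|m| ≤ d` (hence each entry `≤ d`) are encoded as
functions `Fin n → Fin (d+1)`. -/
noncomputable def chi {n d : ℕ} (β : (Fin n → Fin (d+1)) → ℝ)
    (A : Matrix (Fin n) (Fin n) ℝ)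
    (r : EuclideanSpace ℝ (Fin n) → ℝ) (x : EuclideanSpace ℝ (Fin n)) : ℝ :=
  ∑ m : Fin n → Fin (d+1),
    if (∑ i, (m i : ℕ)) ≤ d then
      β m * iteratedFDeriv ℝ (∑ i, (m i : ℕ)) r x (dirs A fun i => (m i : ℕ))
    else 0

/-- The matrix underlying an element of a subgroup `S ≤ O(n)`. -/
noncomputable def matS {n : ℕ} {S : Subgroup ↥(Matrix.orthogonalGroup (Fin n) ℝ)}
    (A : S) : Matrix (Fin n) (Fin n) ℝ :=
  ((A : ↥(Matrix.orthogonalGroup (Fin n) ℝ)) : Matrix (Fin n) (Fin n) ℝ)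

/-- The layer `Φ^S[ẽ](x, A) = ∑_{B ∈ S} χ_B^{(A)}[ẽ(·, A B)](x)` for a finite
subgroup `S` of `O(n)`, where for each `B ∈ S` the coefficients `β B` define the
transformed operator `χ_B^{(A)}`. -/
noncomputable def PhiS {n d : ℕ} (S : Subgroup ↥(Matrix.orthogonalGroup (Fin n) ℝ))
    [Fintype S] (β : S → (Fin n → Fin (d+1)) → ℝ)
    (e : EuclideanSpace ℝ (Fin n) → S → ℝ)
    (x : EuclideanSpace ℝ (Fin n)) (A : S) : ℝ :=
  ∑ B : S, chi (β B) (matS A) (fun y => e y (A * B)) x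

/-! By the chain rule, `D^k (f ∘ M)(x)[v₁, …, v_k] = D^k f(M x)[M v₁, …, M v_k]`, so
precomposing with `M` turns `χ^{(A)}` at `x` into `χ^{(M A)}` at `M x`. Taking `M = Ã⁻¹`,
each summand of `Φ^S[π_Ã[ẽ]](x, A)` is the corresponding summand of `Φ^S[ẽ](Ã⁻¹x, Ã⁻¹A)`,
because `Ã⁻¹ (A B) = (Ã⁻¹ A) B`. -/

theorem mact_apply_eq_toEuclideanCLM {n : ℕ} (M : Matrix (Fin n) (Fin n) ℝ)
    (v : EuclideanSpace ℝ (Fin n)) :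
    mact M v = Matrix.toEuclideanCLM (𝕜 := ℝ) M v := rfl

theorem mact_mul {n : ℕ} (M A : Matrix (Fin n) (Fin n) ℝ) (v : EuclideanSpace ℝ (Fin n)) :
    mact (M * A) v = mact M (mact A v) := by
  simp [mact_apply_eq_toEuclideanCLM]

theorem dirs_mul {n : ℕ} (M A : Matrix (Fin n) (Fin n) ℝ) (m : Fin n → ℕ)
    (j : Fin (∑ i, m i)) : dirs (M * A) m j = mact M (dirs A m j) := by
  simp only [dirs, mact_mul, ← List.map_replicate, ← List.map_flatMap]
  rw [← map_zero (mact M), List.getD_map, map_zero]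

theorem chi_comp_mact {n d : ℕ} (β : (Fin n → Fin (d+1)) → ℝ)
    (M A : Matrix (Fin n) (Fin n) ℝ)
    {f : EuclideanSpace ℝ (Fin n) → ℝ} (hf : ContDiff ℝ d f)
    (x : EuclideanSpace ℝ (Fin n)) :
    chi β A (fun y => f (mact M y)) x = chi β (M * A) f (mact M x) := by
  refine Finset.sum_congr rfl fun m _ => ?_
  split_ifs with hm
  · have hcomp : (fun y => f (mact M y)) = f ∘ Matrix.toEuclideanCLM (𝕜 := ℝ) M := rfl
    rw [hcomp, ContinuousLinearMap.iteratedFDeriv_comp_right _ hf x (by exact_mod_cast hm),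
      ContinuousMultilinearMap.compContinuousLinearMap_apply]
    simp only [← mact_apply_eq_toEuclideanCLM, ← dirs_mul]
  · rfl

theorem matS_mul {n : ℕ} {S : Subgroup (Matrix.orthogonalGroup (Fin n) ℝ)} (A B : S) :
    matS (A * B) = matS A * matS B := rfl

theorem PhiS_equivariance_general {n d : ℕ}
    (S : Subgroup ↥(Matrix.orthogonalGroup (Fin n) ℝ)) [Fintype S]
    (e : EuclideanSpace ℝ (Fin n) → S → ℝ)
    (he : ∀ C : S, ContDiff ℝ (d : ℕ∞) (fun x => e x C))
    (β : S → (Fin n → Fin (d+1)) → ℝ)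
    (Atil : S) (x : EuclideanSpace ℝ (Fin n)) (A : S) :
    PhiS S β (fun y C => e (mact (matS Atil⁻¹) y) (Atil⁻¹ * C)) x A
      = PhiS S β e (mact (matS Atil⁻¹) x) (Atil⁻¹ * A) := by
  refine Finset.sum_congr rfl fun B _ => ?_
  simp only [mul_assoc, chi_comp_mact _ _ _ (he _), matS_mul]

/-- equation (8), finite-subgroup version of Theorem 1: for a finite
subgroup `S ≤ O(n)` and a feature map `ẽ : ℝⁿ × S → ℝ` with every `ẽ(·, C)` `d` times
continuously differentiable, `Φ^S[π_Ã[ẽ]](x, A) = Φ^S[ẽ](Ã⁻¹x, Ã⁻¹A)`, where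
`(π_Ã[ẽ])(x, C) = ẽ(Ã⁻¹x, Ã⁻¹C)`. -/
theorem PhiS_equivariance {n d : ℕ} (hn : 1 ≤ n)
    (S : Subgroup ↥(Matrix.orthogonalGroup (Fin n) ℝ)) [Fintype S]
    (e : EuclideanSpace ℝ (Fin n) → S → ℝ)
    (he : ∀ C : S, ContDiff ℝ (d : ℕ∞) (fun x => e x C))
    (β : S → (Fin n → Fin (d+1)) → ℝ)
    (Atil : S) (x : EuclideanSpace ℝ (Fin n)) (A : S) :
    PhiS S β (fun y C => e (mact (matS Atil⁻¹) y) (Atil⁻¹ * C)) x A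
      = PhiS S β e (mact (matS Atil⁻¹) x) (Atil⁻¹ * A) :=
  PhiS_equivariance_general S e he β Atil x A
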